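/- arXiv:1109.1128 — 2 statements merged into one kernel-verified Lean document; each statement's English description precedes it below -/
import Mathlib

section
/- Let R>0 and Γ>0. For every h with h₁ < h < h₂ there exists an open disk D ⊂ {(x,y) ∈ ℝ² : y < 0} containing the point (0,−2R), such that Ẽ_h(x,y) < 0 for (x,y) ∈ D, Ẽ_h(x,y) = 0 for (x,y) on the boundary circle of D, and Ẽ_h(x,y) > 0 for every (x,y) outside the closure of D. -/
open Real

/-- `b(x,y) := 2R²·(x² + (y−2R)²)/(4R² + x² + y²)`. -/
noncomputable def bfun (R x y : ℝ) : ℝ :=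
  2 * R ^ 2 * (x ^ 2 + (y - 2 * R) ^ 2) / (4 * R ^ 2 + x ^ 2 + y ^ 2)

/-- `Ẽ_h(x,y) := h − (Γ/(8π))·log(b(x,y))`. -/
noncomputable def Etilde (R Γ h x y : ℝ) : ℝ :=
  h - Γ / (8 * π) * Real.log (bfun R x y)

/-!
With `k = Γ/(8π)` and `β = exp (h/k)`, the sign of `Ẽ_h = h - k log b` is the sign of `β - b`,
and `h₁ < h < h₂` says exactly `2R² < β < 4R²`. Writing `β = 2R² + t`, the numerator of
`b - β` is `t (ρ² - x² - (y - c)²)` with `c = -4R³/t` and `ρ² = 4R²(4R⁴ - t²)/t²`, so the level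
set `{b = β}` is a circle of Apollonius for the points `(0, 2R)` and `(0, -2R)`. Since `c < 0`
and `ρ² < c²` the disk misses the upper half-plane, and `t < 2R²` puts `(0, -2R)` inside it.
-/

section SubMulLog

variable {k h b : ℝ}

lemma lt_exp_div_of_mul_log_lt (hk : 0 < k) (hb : 0 < b) (hlt : k * log b < h) :
    b < exp (h / k) :=
  (log_lt_iff_lt_exp hb).1 <| (lt_div_iff₀' hk).2 hlt

lemma exp_div_lt_of_lt_mul_log (hk : 0 < k) (hb : 0 < b) (hlt : h < k * log b) :
    exp (h / k) < b :=
  (lt_log_iff_exp_lt hb).1 <| (div_lt_iff₀' hk).2 hlt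

lemma sub_mul_log_neg (hk : 0 < k) (hb : exp (h / k) < b) : h - k * log b < 0 := by
  have := (div_lt_iff₀' hk).1 <| (lt_log_iff_exp_lt ((exp_pos _).trans hb)).2 hb
  linarith

lemma sub_mul_log_eq_zero (hk : k ≠ 0) (hb : b = exp (h / k)) : h - k * log b = 0 := by
  rw [hb, log_exp, mul_div_cancel₀ h hk, sub_self]

lemma sub_mul_log_pos (hk : 0 < k) (hb₀ : 0 < b) (hb : b < exp (h / k)) :
    0 < h - k * log b := by
  have := (lt_div_iff₀' hk).1 <| (log_lt_iff_lt_exp hb₀).2 hb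
  linarith

end SubMulLog

/-- `(0, levelCenter R t)` and `levelRadiusSq R t` are the centre and squared radius of the
circle `{b = 2R² + t}`. -/
noncomputable def levelCenter (R t : ℝ) : ℝ := -(4 * R ^ 3) / t

noncomputable def levelRadiusSq (R t : ℝ) : ℝ := 4 * R ^ 2 * (4 * R ^ 4 - t ^ 2) / t ^ 2

section LevelCircle

variable {R t x y : ℝ}

lemma bfun_sub_eq (hR : R ≠ 0) (ht : t ≠ 0) :
    bfun R x y - (2 * R ^ 2 + t) =
      t * (levelRadiusSq R t - (x ^ 2 + (y - levelCenter R t) ^ 2)) /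
        (4 * R ^ 2 + x ^ 2 + y ^ 2) := by
  have hD : 4 * R ^ 2 + x ^ 2 + y ^ 2 ≠ 0 := by positivity
  unfold bfun levelRadiusSq levelCenter
  field_simp
  ring

lemma bfun_pos (hR : R ≠ 0) (hxy : (x, y) ≠ (0, 2 * R)) : 0 < bfun R x y := by
  have hN : 0 < x ^ 2 + (y - 2 * R) ^ 2 := by
    by_contra! hN
    have hx : x = 0 := by nlinarith [sq_nonneg x, sq_nonneg (y - 2 * R)]
    have hy : y = 2 * R := by nlinarith [sq_nonneg x, sq_nonneg (y - 2 * R)]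
    exact hxy (by rw [hx, hy])
  unfold bfun
  positivity

lemma lt_bfun_of_lt_levelRadiusSq (hR : R ≠ 0) (ht : 0 < t)
    (hxy : x ^ 2 + (y - levelCenter R t) ^ 2 < levelRadiusSq R t) :
    2 * R ^ 2 + t < bfun R x y := by
  rw [← sub_pos, bfun_sub_eq hR ht.ne']
  exact div_pos (mul_pos ht (sub_pos.2 hxy)) (by positivity)

lemma bfun_eq_of_eq_levelRadiusSq (hR : R ≠ 0) (ht : t ≠ 0)
    (hxy : x ^ 2 + (y - levelCenter R t) ^ 2 = levelRadiusSq R t) :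
    bfun R x y = 2 * R ^ 2 + t := by
  rw [← sub_eq_zero, bfun_sub_eq hR ht, hxy, sub_self, mul_zero, zero_div]

lemma bfun_lt_of_levelRadiusSq_lt (hR : R ≠ 0) (ht : 0 < t)
    (hxy : levelRadiusSq R t < x ^ 2 + (y - levelCenter R t) ^ 2) :
    bfun R x y < 2 * R ^ 2 + t := by
  rw [← sub_neg, bfun_sub_eq hR ht.ne']
  exact div_neg_of_neg_of_pos (mul_neg_of_pos_of_neg ht (sub_neg.2 hxy)) (by positivity)

lemma levelRadiusSq_pos (hR : R ≠ 0) (ht : 0 < t) (ht' : t < 2 * R ^ 2) :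
    0 < levelRadiusSq R t := by
  unfold levelRadiusSq
  have : 0 < 4 * R ^ 4 - t ^ 2 := by nlinarith
  positivity

lemma levelRadiusSq_lt_levelCenter_sq (hR : R ≠ 0) (ht : t ≠ 0) :
    levelRadiusSq R t < levelCenter R t ^ 2 := by
  unfold levelRadiusSq levelCenter
  rw [div_pow, div_lt_div_iff_of_pos_right (by positivity)]
  nlinarith [pow_pos (sq_pos_of_ne_zero hR) 2, sq_pos_of_ne_zero ht]

lemma neg_of_lt_levelRadiusSq (hR : 0 < R) (ht : 0 < t)
    (hxy : x ^ 2 + (y - levelCenter R t) ^ 2 < levelRadiusSq R t) : y < 0 := by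
  have hc : levelCenter R t < 0 := div_neg_of_neg_of_pos (neg_lt_zero.2 (by positivity)) ht
  have := levelRadiusSq_lt_levelCenter_sq hR.ne' ht.ne'
  by_contra! hy
  nlinarith [sq_nonneg x]

lemma neg_two_mul_sub_levelCenter_sq_lt (hR : 0 < R) (ht : 0 < t) (ht' : t < 2 * R ^ 2) :
    (-(2 * R) - levelCenter R t) ^ 2 < levelRadiusSq R t := by
  unfold levelRadiusSq levelCenter
  rw [show -(2 * R) - -(4 * R ^ 3) / t = (4 * R ^ 3 - 2 * R * t) / t by field_simp; ring,
    div_pow, div_lt_div_iff_of_pos_right (by positivity)]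
  nlinarith [mul_pos (mul_pos (pow_pos hR 4) ht) (sub_pos.2 ht')]

end LevelCircle

/-- for `h₁ < h < h₂` there is an open disk `D` contained in the lower
half-plane `{y < 0}` and containing `(0,−2R)` on which `Ẽ_h < 0`, with `Ẽ_h = 0` on its
boundary circle and `Ẽ_h > 0` outside its closure (on the domain `ℝ² ∖ {(0,2R)}`). -/
theorem Etilde_sign_of_energy_between (R Γ h : ℝ) (hR : 0 < R) (hΓ : 0 < Γ)
    (hh1 : Γ / (8 * π) * Real.log (2 * R ^ 2) < h)
    (hh2 : h < Γ / (4 * π) * Real.log (2 * R)) :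
    ∃ c₁ c₂ ρ : ℝ, 0 < ρ ∧
      (∀ x y : ℝ, (x - c₁) ^ 2 + (y - c₂) ^ 2 < ρ ^ 2 → y < 0) ∧
      ((0 - c₁) ^ 2 + (-(2 * R) - c₂) ^ 2 < ρ ^ 2) ∧
      (∀ x y : ℝ, (x - c₁) ^ 2 + (y - c₂) ^ 2 < ρ ^ 2 → Etilde R Γ h x y < 0) ∧
      (∀ x y : ℝ, (x - c₁) ^ 2 + (y - c₂) ^ 2 = ρ ^ 2 → Etilde R Γ h x y = 0) ∧
      (∀ x y : ℝ, ρ ^ 2 < (x - c₁) ^ 2 + (y - c₂) ^ 2 → (x, y) ≠ ((0 : ℝ), 2 * R) →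
        0 < Etilde R Γ h x y) := by
  have hk : 0 < Γ / (8 * π) := by positivity
  have hβ₁ := lt_exp_div_of_mul_log_lt hk (by positivity) hh1
  have hβ₂ : exp (h / (Γ / (8 * π))) < 4 * R ^ 2 := by
    refine exp_div_lt_of_lt_mul_log hk (by positivity) ?_
    rwa [show 4 * R ^ 2 = (2 * R) ^ 2 by ring, log_pow, Nat.cast_ofNat,
      show Γ / (8 * π) * (2 * log (2 * R)) = Γ / (4 * π) * log (2 * R) by field_simp; ring]
  set t := exp (h / (Γ / (8 * π))) - 2 * R ^ 2
  have hβ : exp (h / (Γ / (8 * π))) = 2 * R ^ 2 + t := by ring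
  have ht : 0 < t := by linarith
  have ht' : t < 2 * R ^ 2 := by linarith
  have hρ := levelRadiusSq_pos hR.ne' ht ht'
  refine ⟨0, levelCenter R t, √(levelRadiusSq R t), sqrt_pos.2 hρ, ?_, ?_, ?_, ?_, ?_⟩ <;>
    simp only [sub_zero, sq_sqrt hρ.le, zero_pow two_ne_zero, zero_add]
  · exact fun x y => neg_of_lt_levelRadiusSq hR ht
  · exact neg_two_mul_sub_levelCenter_sq_lt hR ht ht'
  · exact fun x y hxy => sub_mul_log_neg hk <| hβ ▸ lt_bfun_of_lt_levelRadiusSq hR.ne' ht hxy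
  · exact fun x y hxy => sub_mul_log_eq_zero hk.ne' <|
      hβ ▸ bfun_eq_of_eq_levelRadiusSq hR.ne' ht.ne' hxy
  · exact fun x y hxy hne => sub_mul_log_pos hk (bfun_pos hR.ne' hne) <|
      hβ ▸ bfun_lt_of_levelRadiusSq_lt hR.ne' ht hxy
end

section
/- Let R>0 and let δ ∈ (0, 4R²) with δ ≠ 2R². Then the level set {(x,y) ∈ ℝ² : b(x,y) = δ} is exactly the circle of center (0, 4R³/(2R²−δ)) and radius (2R/|2R²−δ|)·√(δ·(4R²−δ)); equivalently, it is the set of points satisfying x² + y² − (8R³/(2R²−δ))·y + 4R² = 0. -/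
open Real

/-! Clearing the (positive) denominator of `b` turns `b = δ` into the quadric
`(2R² − δ)(x² + y²) − 8R³y + 4R²(2R² − δ) = 0`. For `δ ≠ 2R²` the leading coefficient is
nonzero, so this is a circle centred on the `y`-axis, and completing the square gives its
radius through `4R⁴ − (2R² − δ)² = δ(4R² − δ)`. -/

lemma bfun_eq_iff {R : ℝ} (hR : R ≠ 0) (x y δ : ℝ) :
    bfun R x y = δ ↔
      (2 * R ^ 2 - δ) * (x ^ 2 + y ^ 2) - 8 * R ^ 3 * y + 4 * R ^ 2 * (2 * R ^ 2 - δ) = 0 := by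
  have hden : 4 * R ^ 2 + x ^ 2 + y ^ 2 ≠ 0 := by positivity
  rw [bfun, div_eq_iff hden]
  constructor <;> intro h <;> linear_combination h

lemma bfun_eq_iff_monic {R δ : ℝ} (hR : R ≠ 0) (hδ : δ ≠ 2 * R ^ 2) (x y : ℝ) :
    bfun R x y = δ ↔ x ^ 2 + y ^ 2 - 8 * R ^ 3 / (2 * R ^ 2 - δ) * y + 4 * R ^ 2 = 0 := by
  have hc : 2 * R ^ 2 - δ ≠ 0 := sub_ne_zero.mpr hδ.symm
  have hscale : (2 * R ^ 2 - δ) * (x ^ 2 + y ^ 2 - 8 * R ^ 3 / (2 * R ^ 2 - δ) * y + 4 * R ^ 2)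
      = (2 * R ^ 2 - δ) * (x ^ 2 + y ^ 2) - 8 * R ^ 3 * y + 4 * R ^ 2 * (2 * R ^ 2 - δ) := by
    field_simp
  rw [bfun_eq_iff hR, ← hscale, mul_eq_zero, or_iff_right hc]

lemma level_circle_radius_sq {R δ : ℝ} (hδ : δ ∈ Set.Icc 0 (4 * R ^ 2)) (hc : 2 * R ^ 2 - δ ≠ 0) :
    (2 * R / |2 * R ^ 2 - δ| * √(δ * (4 * R ^ 2 - δ))) ^ 2
      = (4 * R ^ 3 / (2 * R ^ 2 - δ)) ^ 2 - 4 * R ^ 2 := by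
  have hs : √(δ * (4 * R ^ 2 - δ)) ^ 2 = δ * (4 * R ^ 2 - δ) :=
    sq_sqrt (mul_nonneg hδ.1 (sub_nonneg.mpr hδ.2))
  rw [mul_pow, div_pow, sq_abs, hs]
  field_simp
  ring

theorem level_set_of_b_is_circle_general (R δ : ℝ)
    (hδ : δ ∈ Set.Ioo 0 (4 * R ^ 2)) (hδ' : δ ≠ 2 * R ^ 2) :
    ∀ x y : ℝ,
      (bfun R x y = δ ↔
        x ^ 2 + (y - 4 * R ^ 3 / (2 * R ^ 2 - δ)) ^ 2 =
          (2 * R / |2 * R ^ 2 - δ| * Real.sqrt (δ * (4 * R ^ 2 - δ))) ^ 2) ∧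
      (bfun R x y = δ ↔
        x ^ 2 + y ^ 2 - 8 * R ^ 3 / (2 * R ^ 2 - δ) * y + 4 * R ^ 2 = 0) := by
  intro x y
  have hR : R ≠ 0 := by
    rintro rfl
    exact (hδ.1.trans hδ.2).ne (by ring)
  have hc : 2 * R ^ 2 - δ ≠ 0 := sub_ne_zero.mpr hδ'.symm
  refine ⟨?_, bfun_eq_iff_monic hR hδ' x y⟩
  rw [bfun_eq_iff_monic hR hδ', level_circle_radius_sq (Set.Ioo_subset_Icc_self hδ) hc]
  constructor <;> intro h <;> linear_combination h

/-- for `δ ∈ (0,4R²)`, `δ ≠ 2R²`, the level set `{b = δ}` is the circle of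
center `(0, 4R³/(2R²−δ))` and radius `(2R/|2R²−δ|)·√(δ(4R²−δ))`; equivalently it is the
set of solutions of `x² + y² − (8R³/(2R²−δ))y + 4R² = 0`. -/
theorem level_set_of_b_is_circle (R δ : ℝ) (hR : 0 < R)
    (hδ : δ ∈ Set.Ioo 0 (4 * R ^ 2)) (hδ' : δ ≠ 2 * R ^ 2) :
    ∀ x y : ℝ,
      (bfun R x y = δ ↔
        x ^ 2 + (y - 4 * R ^ 3 / (2 * R ^ 2 - δ)) ^ 2 =
          (2 * R / |2 * R ^ 2 - δ| * Real.sqrt (δ * (4 * R ^ 2 - δ))) ^ 2) ∧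
      (bfun R x y = δ ↔
        x ^ 2 + y ^ 2 - 8 * R ^ 3 / (2 * R ^ 2 - δ) * y + 4 * R ^ 2 = 0) :=
  level_set_of_b_is_circle_general R δ hδ hδ'
end
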